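/- arXiv:1212.5766 — 7 statements merged into one kernel-verified Lean document; each statement's English description precedes it below -/
import Mathlib

section
/- For 0 < p < 1/2, with z = p(1-p), we have sqrt(1 - 4z) = 1 - 2p, and consequently sum over i ≥ 1 of i * binom(2i, i) * (p(1-p))^i equals 2p(1-p) / (1 - 2p)^3. -/
/-!
Let `S x = ∑ C(2n, n) xⁿ`, which converges for `|x| < 1/4` since `C(2n, n) ≤ 4ⁿ`. The recurrence
`(n + 1) C(2n + 2, n + 1) = 2 (2n + 1) C(2n, n)` turns into the differential equation
`(1 - 4x) S' = 2S`, so `S² (1 - 4x)` has zero derivative and equals its value `1` at `0`.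
Hence `S x = (1 - 4x)^(-1/2)` for `0 ≤ x < 1/4`, and `∑ n C(2n, n) xⁿ = x S' x = 2x S x / (1 - 4x)`.
At `x = p (1 - p)` we have `1 - 4x = (1 - 2p)²`.
-/

open Set

noncomputable def centralBinomSeries (x : ℝ) : ℝ :=
  ∑' n, (n.centralBinom : ℝ) * x ^ n

/-- The termwise derivative of `centralBinomSeries`; the truncated `n - 1` only occurs in the
vanishing `n = 0` term. -/
noncomputable def centralBinomSeriesDeriv (x : ℝ) : ℝ :=
  ∑' n : ℕ, n * (n.centralBinom : ℝ) * x ^ (n - 1)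

lemma succ_mul_centralBinom_succ_mul_pow (n : ℕ) (x : ℝ) :
    ((n + 1 : ℕ) : ℝ) * ((n + 1).centralBinom : ℝ) * x ^ n =
      4 * x * (n * (n.centralBinom : ℝ) * x ^ (n - 1)) +
        2 * ((n.centralBinom : ℝ) * x ^ n) := by
  rcases n with _ | n
  · simp [Nat.centralBinom]
  · have h := congrArg (Nat.cast (R := ℝ)) (Nat.succ_mul_centralBinom_succ (n + 1))
    push_cast at h ⊢
    rw [h, pow_succ]
    ring

section

variable {x : ℝ}

lemma abs_centralBinom_mul_pow_le {r : ℝ} (hx : |x| ≤ r) (n : ℕ) :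
    |(n.centralBinom : ℝ) * x ^ n| ≤ (4 * r) ^ n := by
  rw [abs_mul, abs_pow, Nat.abs_cast, mul_pow]
  exact mul_le_mul (by exact_mod_cast n.centralBinom_le_four_pow)
    (pow_le_pow_left₀ (abs_nonneg x) hx n) (by positivity) (by positivity)

lemma summable_centralBinom_mul_pow (hx : |x| < 1 / 4) :
    Summable fun n ↦ (n.centralBinom : ℝ) * x ^ n :=
  .of_norm_bounded (summable_geometric_of_lt_one (by positivity) (by linarith))
    (abs_centralBinom_mul_pow_le le_rfl)

lemma abs_mul_centralBinom_mul_pow_sub_one_le {r : ℝ} (hr : 0 < r) (hx : |x| ≤ r) (n : ℕ) :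
    |n * (n.centralBinom : ℝ) * x ^ (n - 1)| ≤ n * (4 * r) ^ n / r := by
  rcases n with _ | n
  · simp
  · have hxn : |x| ^ n ≤ r ^ n := pow_le_pow_left₀ (abs_nonneg x) hx n
    have h4 : ((n + 1).centralBinom : ℝ) ≤ 4 ^ (n + 1) := by
      exact_mod_cast (n + 1).centralBinom_le_four_pow
    rw [abs_mul, abs_mul, abs_pow, Nat.abs_cast, Nat.abs_cast, Nat.add_sub_cancel,
      le_div_iff₀ hr, mul_pow, pow_succ r]
    calc _ ≤ ((n + 1 : ℕ) : ℝ) * 4 ^ (n + 1) * r ^ n * r := by gcongr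
      _ = _ := by ring

lemma summable_mul_four_mul_pow_div {r : ℝ} (hr : 0 ≤ r) (hr4 : r < 1 / 4) :
    Summable fun n : ℕ ↦ n * (4 * r) ^ n / r := by
  have h := summable_pow_mul_geometric_of_norm_lt_one 1 (r := 4 * r)
    (by rw [Real.norm_of_nonneg (by positivity)]; linarith)
  simpa using h.div_const r

lemma summable_mul_centralBinom_mul_pow_sub_one (hx : |x| < 1 / 4) :
    Summable fun n : ℕ ↦ n * (n.centralBinom : ℝ) * x ^ (n - 1) := by
  obtain ⟨r, hxr, hr4⟩ := exists_between hx
  have hr : 0 < r := (abs_nonneg x).trans_lt hxr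
  exact .of_norm_bounded (summable_mul_four_mul_pow_div hr.le hr4)
    (abs_mul_centralBinom_mul_pow_sub_one_le hr hxr.le)

lemma hasSum_centralBinomSeriesDeriv (hx : |x| < 1 / 4) :
    HasSum (fun n : ℕ ↦ n * (n.centralBinom : ℝ) * x ^ (n - 1)) (centralBinomSeriesDeriv x) :=
  (summable_mul_centralBinom_mul_pow_sub_one hx).hasSum

lemma hasDerivAt_centralBinomSeries (hx : |x| < 1 / 4) :
    HasDerivAt centralBinomSeries (centralBinomSeriesDeriv x) x := by
  obtain ⟨r, hxr, hr4⟩ := exists_between hx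
  have hr : 0 < r := (abs_nonneg x).trans_lt hxr
  refine hasDerivAt_tsum_of_isPreconnected (g := fun (n : ℕ) y ↦ (n.centralBinom : ℝ) * y ^ n)
    (g' := fun (n : ℕ) y ↦ n * (n.centralBinom : ℝ) * y ^ (n - 1))
    (summable_mul_four_mul_pow_div hr.le hr4) isOpen_Ioo isPreconnected_Ioo
    (fun n y _ ↦ ?_) (fun n y hy ↦ ?_) (y₀ := 0) (by simp [hr])
    (summable_centralBinom_mul_pow (by simp)) (abs_lt.1 hxr)
  · simpa [mul_assoc, mul_left_comm] using (hasDerivAt_pow n y).const_mul (n.centralBinom : ℝ)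
  · exact abs_mul_centralBinom_mul_pow_sub_one_le hr (abs_le.2 ⟨hy.1.le, hy.2.le⟩) n

@[simp]
lemma centralBinomSeries_zero : centralBinomSeries 0 = 1 := by
  rw [centralBinomSeries, tsum_eq_single 0 fun n hn ↦ by simp [hn]]
  simp

lemma one_sub_four_mul_mul_centralBinomSeriesDeriv (hx : |x| < 1 / 4) :
    (1 - 4 * x) * centralBinomSeriesDeriv x = 2 * centralBinomSeries x := by
  have hD := hasSum_centralBinomSeriesDeriv hx
  have h₁ : HasSum (fun n : ℕ ↦ ((n + 1 : ℕ) : ℝ) * ((n + 1).centralBinom : ℝ) * x ^ n)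
      (centralBinomSeriesDeriv x) := by
    simpa using (hasSum_nat_add_iff' 1).mpr hD
  have h₂ : HasSum (fun n : ℕ ↦ ((n + 1 : ℕ) : ℝ) * ((n + 1).centralBinom : ℝ) * x ^ n)
      (4 * x * centralBinomSeriesDeriv x + 2 * centralBinomSeries x) := by
    have h := (hD.mul_left (4 * x)).add ((summable_centralBinom_mul_pow hx).hasSum.mul_left 2)
    simp only [← succ_mul_centralBinom_succ_mul_pow] at h
    exact h
  linarith [h₁.unique h₂]

lemma centralBinomSeries_sq_mul_one_sub_four_mul (hx : |x| < 1 / 4) :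
    centralBinomSeries x ^ 2 * (1 - 4 * x) = 1 := by
  have hF : ∀ y ∈ Ioo (-(1 / 4)) (1 / 4),
      HasDerivAt (fun y ↦ centralBinomSeries y ^ 2 * (1 - 4 * y)) 0 y := by
    intro y hy
    have hy' : |y| < 1 / 4 := abs_lt.2 hy
    have h := ((hasDerivAt_centralBinomSeries hy').fun_pow 2).fun_mul
      (((hasDerivAt_id' y).const_mul 4).const_sub 1)
    refine h.congr_deriv ?_
    linear_combination
      (2 * centralBinomSeries y) * one_sub_four_mul_mul_centralBinomSeriesDeriv hy'
  have hconst := isOpen_Ioo.is_const_of_deriv_eq_zero isPreconnected_Ioo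
    (fun y hy ↦ (hF y hy).differentiableAt.differentiableWithinAt)
    (fun y hy ↦ (hF y hy).deriv) (abs_lt.1 hx)
    (by norm_num : (0 : ℝ) ∈ Ioo (-(1 / 4)) (1 / 4))
  simpa using hconst

lemma one_le_centralBinomSeries (hx0 : 0 ≤ x) (hx : x < 1 / 4) : 1 ≤ centralBinomSeries x := by
  have h := (summable_centralBinom_mul_pow (abs_lt.2 ⟨by linarith, hx⟩)).le_tsum 0
    (fun n _ ↦ by positivity)
  rw [centralBinomSeries]
  simpa using h

lemma centralBinomSeries_eq_inv_sqrt (hx0 : 0 ≤ x) (hx : x < 1 / 4) :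
    centralBinomSeries x = (√(1 - 4 * x))⁻¹ := by
  have hS := centralBinomSeries_sq_mul_one_sub_four_mul (abs_lt.2 ⟨by linarith, hx⟩)
  have hpos := (zero_le_one' ℝ).trans (one_le_centralBinomSeries hx0 hx)
  refine eq_inv_of_mul_eq_one_left ?_
  rw [← Real.sqrt_sq hpos, ← Real.sqrt_mul (sq_nonneg _), hS, Real.sqrt_one]

lemma hasSum_mul_centralBinom_mul_pow (hx : |x| < 1 / 4) :
    HasSum (fun n : ℕ ↦ n * (n.centralBinom : ℝ) * x ^ n)
      (2 * x * centralBinomSeries x / (1 - 4 * x)) := by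
  have hD := (hasSum_centralBinomSeriesDeriv hx).mul_left x
  have hterm : ∀ n : ℕ, x * (n * (n.centralBinom : ℝ) * x ^ (n - 1)) =
      n * (n.centralBinom : ℝ) * x ^ n := by
    rintro (_ | n)
    · simp
    · rw [Nat.add_sub_cancel, pow_succ]
      ring
  have hne : 1 - 4 * x ≠ 0 := by linarith [(abs_lt.1 hx).2]
  have hsum : x * centralBinomSeriesDeriv x =
      2 * x * centralBinomSeries x / (1 - 4 * x) := by
    rw [eq_div_iff hne]
    linear_combination x * one_sub_four_mul_mul_centralBinomSeriesDeriv hx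
  simpa only [hterm, hsum] using hD

end

theorem central_binom_series_at_p (p : ℝ) (h0 : 0 < p) (h2 : p < 1/2) :
    Real.sqrt (1 - 4 * (p * (1 - p))) = 1 - 2 * p ∧
    ∑' i : ℕ, (i : ℝ) * (Nat.centralBinom i : ℝ) * (p * (1 - p)) ^ i
      = 2 * p * (1 - p) / (1 - 2 * p) ^ 3 := by
  have hsq : 1 - 4 * (p * (1 - p)) = (1 - 2 * p) ^ 2 := by ring
  have hsqrt : √(1 - 4 * (p * (1 - p))) = 1 - 2 * p := by
    rw [hsq, Real.sqrt_sq (by linarith)]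
  have hx0 : 0 ≤ p * (1 - p) := by nlinarith
  have hx : p * (1 - p) < 1 / 4 := by nlinarith
  refine ⟨hsqrt, ?_⟩
  rw [(hasSum_mul_centralBinom_mul_pow (abs_lt.2 ⟨by linarith, hx⟩)).tsum_eq,
    centralBinomSeries_eq_inv_sqrt hx0 hx, hsqrt, hsq]
  have hne : 1 - 2 * p ≠ 0 := by linarith
  field_simp
end

section
/- Let x : Fin n → ℝ be non-increasing (swap monotone) with x_i ≥ 0, and let v : Fin n → ℝ be non-increasing with v_i ≥ 0. Define p_i^min = Σ_{j=i+1}^{n} (x_{j-1} - x_j) v_j and p_i^max = Σ_{j=i}^{n} (x_j - x_{j+1}) v_j (with x_{n+1} = 0). Then the outcome (x, p^min) is envy-free, i.e., for all i, j: v_i x_i - p_i^min ≥ v_i x_j - p_j^min. -/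
/-- Minimum envy-free payment of agent `i` among `n` agents (0-indexed):
`p_i^min = ∑_{j=i+1}^{n-1} (x_{j-1} - x_j) v_j`. -/
def pMin (x v : ℕ → ℝ) (n i : ℕ) : ℝ :=
  ∑ j ∈ Finset.Ico (i + 1) n, (x (j - 1) - x j) * v j

/-!
For `a ≤ b`, the payment difference `p_a - p_b` is the sum over `k ∈ (a, b]` of the drops
`x_{k-1} - x_k ≥ 0` weighted by `v_k`. Since `v` is non-increasing, each weight lies between
`v_b` and `v_a`, and the drops telescope to `x_a - x_b`; so
`v_b (x_a - x_b) ≤ p_a - p_b ≤ v_a (x_a - x_b)`. The upper bound is envy-freeness of `a` towards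
`b`, the lower bound that of `b` towards `a`.
-/

open Finset

lemma sum_Ico_succ_sub_pred (x : ℕ → ℝ) {a b : ℕ} (hab : a ≤ b) :
    ∑ k ∈ Ico (a + 1) (b + 1), (x (k - 1) - x k) = x a - x b := by
  rw [← sum_Ico_add']
  simp only [Nat.add_sub_cancel]
  rw [← neg_sub (x b), ← sum_Ico_sub x hab, ← sum_neg_distrib]
  simp only [neg_sub]

lemma pMin_sub_pMin (x v : ℕ → ℝ) {n a b : ℕ} (hab : a ≤ b) (hb : b < n) :
    pMin x v n a - pMin x v n b = ∑ k ∈ Ico (a + 1) (b + 1), (x (k - 1) - x k) * v k := by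
  rw [pMin, pMin, ← sum_Ico_consecutive _ (by omega : a + 1 ≤ b + 1) hb, add_sub_cancel_right]

section Bounds

variable {x v : ℕ → ℝ} {a b : ℕ}

lemma mul_sub_le_sum_Ico (hx : AntitoneOn x (Set.Icc a b)) (hv : AntitoneOn v (Set.Icc a b))
    (hab : a ≤ b) :
    v b * (x a - x b) ≤ ∑ k ∈ Ico (a + 1) (b + 1), (x (k - 1) - x k) * v k := by
  rw [← sum_Ico_succ_sub_pred x hab, mul_comm, sum_mul]
  refine sum_le_sum fun k hk => ?_
  rw [mem_Ico] at hk
  exact mul_le_mul_of_nonneg_left (hv ⟨by omega, by omega⟩ ⟨hab, le_rfl⟩ (by omega))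
    (sub_nonneg.2 (hx ⟨by omega, by omega⟩ ⟨by omega, by omega⟩ (by omega)))

lemma sum_Ico_le_mul_sub (hx : AntitoneOn x (Set.Icc a b)) (hv : AntitoneOn v (Set.Icc a b))
    (hab : a ≤ b) :
    ∑ k ∈ Ico (a + 1) (b + 1), (x (k - 1) - x k) * v k ≤ v a * (x a - x b) := by
  rw [← sum_Ico_succ_sub_pred x hab, mul_comm, sum_mul]
  refine sum_le_sum fun k hk => ?_
  rw [mem_Ico] at hk
  exact mul_le_mul_of_nonneg_left (hv ⟨le_rfl, hab⟩ ⟨by omega, by omega⟩ (by omega))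
    (sub_nonneg.2 (hx ⟨by omega, by omega⟩ ⟨by omega, by omega⟩ (by omega)))

end Bounds

lemma antitoneOn_Iio_of_succ_le {f : ℕ → ℝ} {n : ℕ} (hf : ∀ j, j + 1 < n → f (j + 1) ≤ f j) :
    AntitoneOn f (Set.Iio n) :=
  antitoneOn_of_add_one_le Set.ordConnected_Iio fun j _ _ hj => hf j hj

theorem min_payments_envy_free_general (n : ℕ) (x v : ℕ → ℝ)
    (hxmono : ∀ j, j + 1 < n → x (j + 1) ≤ x j)
    (hvmono : ∀ j, j + 1 < n → v (j + 1) ≤ v j) :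
    ∀ i < n, ∀ j < n,
      v i * x i - pMin x v n i ≥ v i * x j - pMin x v n j := by
  intro i hi j hj
  have hx := antitoneOn_Iio_of_succ_le hxmono
  have hv := antitoneOn_Iio_of_succ_le hvmono
  rcases le_total i j with hij | hji
  · have hsub : Set.Icc i j ⊆ Set.Iio n := fun k hk => lt_of_le_of_lt hk.2 hj
    have hdiff := sum_Ico_le_mul_sub (hx.mono hsub) (hv.mono hsub) hij
    rw [← pMin_sub_pMin x v hij hj] at hdiff
    linarith
  · have hsub : Set.Icc j i ⊆ Set.Iio n := fun k hk => lt_of_le_of_lt hk.2 hi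
    have hdiff := mul_sub_le_sum_Ico (hx.mono hsub) (hv.mono hsub) hji
    rw [← pMin_sub_pMin x v hji hi] at hdiff
    linarith

theorem min_payments_envy_free (n : ℕ) (x v : ℕ → ℝ)
    (hxmono : ∀ j, j + 1 < n → x (j + 1) ≤ x j)
    (hxpos : ∀ j, j < n → 0 ≤ x j)
    (hvmono : ∀ j, j + 1 < n → v (j + 1) ≤ v j)
    (hvpos : ∀ j, j < n → 0 ≤ v j) :
    ∀ i < n, ∀ j < n,
      v i * x i - pMin x v n i ≥ v i * x j - pMin x v n j :=
  min_payments_envy_free_general n x v hxmono hvmono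
end

section
/- The envy-free optimal revenue is subadditive over partitions of the agents: if the agent set N is partitioned into S and M, then EFO(S) + EFO(M) ≥ EFO(N), where EFO(T) denotes the maximum total payment over outcomes for the agents in T that are envy-free, individually rational, and budget respecting within a symmetric downward-closed feasibility environment. -/
/-!
An envy-free, individually rational, budget-respecting outcome for `S ∪ M` stays one when the same
allocation and payments are restricted to `S` and to `M`, since every constraint only compares agents
of the set itself. Its revenue therefore splits as a revenue achievable on `S` plus one achievable on
`M`, and taking the supremum over outcomes gives subadditivity.
-/

namespace EnvyFree

variable {ι : Type*} (v : ι → ℝ) (B : ℝ) (F : Set (ι → ℝ))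

def revenueSet (T : Finset ι) : Set ℝ :=
  {r : ℝ | ∃ x p : ι → ℝ,
    x ∈ F ∧
    (∀ i ∈ T, ∀ j ∈ T, v i * x i - p i ≥ v i * x j - p j) ∧
    (∀ i ∈ T, v i * x i - p i ≥ 0) ∧
    (∀ i ∈ T, p i ≤ B) ∧
    r = ∑ i ∈ T, p i}

variable {v B F}

theorem zero_mem_revenueSet (hB : 0 ≤ B) (hF0 : (0 : ι → ℝ) ∈ F) (T : Finset ι) :
    (0 : ℝ) ∈ revenueSet v B F T :=
  ⟨0, 0, hF0, by simp, by simp, by simp [hB], by simp⟩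

theorem revenueSet_bddAbove (T : Finset ι) : BddAbove (revenueSet v B F T) := by
  refine ⟨T.card * B, ?_⟩
  rintro r ⟨x, p, -, -, -, hbud, rfl⟩
  simpa using Finset.sum_le_sum hbud

theorem sum_mem_revenueSet_of_subset {T U : Finset ι} (hTU : T ⊆ U) {x p : ι → ℝ} (hx : x ∈ F)
    (hef : ∀ i ∈ U, ∀ j ∈ U, v i * x i - p i ≥ v i * x j - p j)
    (hir : ∀ i ∈ U, v i * x i - p i ≥ 0) (hbud : ∀ i ∈ U, p i ≤ B) :
    ∑ i ∈ T, p i ∈ revenueSet v B F T :=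
  ⟨x, p, hx, fun i hi j hj => hef i (hTU hi) j (hTU hj), fun i hi => hir i (hTU hi),
    fun i hi => hbud i (hTU hi), rfl⟩

theorem sSup_revenueSet_union_le (hB : 0 ≤ B) (hF0 : (0 : ι → ℝ) ∈ F) {S M : Finset ι}
    [DecidableEq ι] (hdisj : Disjoint S M) :
    sSup (revenueSet v B F (S ∪ M)) ≤ sSup (revenueSet v B F S) + sSup (revenueSet v B F M) := by
  refine csSup_le ⟨0, zero_mem_revenueSet hB hF0 _⟩ ?_
  rintro r ⟨x, p, hx, hef, hir, hbud, rfl⟩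
  rw [Finset.sum_union hdisj]
  exact add_le_add
    (le_csSup (revenueSet_bddAbove S)
      (sum_mem_revenueSet_of_subset Finset.subset_union_left hx hef hir hbud))
    (le_csSup (revenueSet_bddAbove M)
      (sum_mem_revenueSet_of_subset Finset.subset_union_right hx hef hir hbud))

end EnvyFree

open Classical in

theorem EFO_subadditive_general (n : ℕ) (v : Fin n → ℝ) (B : ℝ)
    (hB : 0 ≤ B)
    (F : Set (Fin n → ℝ))                       -- feasible allocations
    (hF0 : (0 : Fin n → ℝ) ∈ F)
    (EFO : Finset (Fin n) → ℝ)
    (hEFO : ∀ T : Finset (Fin n), EFO T = sSup {r : ℝ | ∃ x p : Fin n → ℝ,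
      x ∈ F ∧
      (∀ i ∈ T, ∀ j ∈ T, v i * x i - p i ≥ v i * x j - p j) ∧  -- envy free
      (∀ i ∈ T, v i * x i - p i ≥ 0) ∧                          -- IR
      (∀ i ∈ T, p i ≤ B) ∧                                      -- budget
      r = ∑ i ∈ T, p i})
    (S M : Finset (Fin n)) (hdisj : Disjoint S M) (hcover : S ∪ M = Finset.univ) :
    EFO S + EFO M ≥ EFO Finset.univ := by
  simp only [hEFO, ← hcover]
  exact EnvyFree.sSup_revenueSet_union_le hB hF0 hdisj

open Classical in
theorem EFO_subadditive (n : ℕ) (v : Fin n → ℝ) (B : ℝ)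
    (hB : 0 ≤ B) (hv : ∀ i, 0 ≤ v i)
    (F : Set (Fin n → ℝ))                       -- feasible allocations
    (hF0 : (0 : Fin n → ℝ) ∈ F)
    (hFdc : ∀ x ∈ F, ∀ T : Set (Fin n),         -- downward closed
      (fun i => if i ∈ T then x i else 0) ∈ F)
    (hFsym : ∀ x ∈ F, ∀ σ : Equiv.Perm (Fin n), x ∘ σ ∈ F)  -- symmetric
    (EFO : Finset (Fin n) → ℝ)
    (hEFO : ∀ T : Finset (Fin n), EFO T = sSup {r : ℝ | ∃ x p : Fin n → ℝ,
      x ∈ F ∧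
      (∀ i ∈ T, ∀ j ∈ T, v i * x i - p i ≥ v i * x j - p j) ∧  -- envy free
      (∀ i ∈ T, v i * x i - p i ≥ 0) ∧                          -- IR
      (∀ i ∈ T, p i ≤ B) ∧                                      -- budget
      r = ∑ i ∈ T, p i})
    (S M : Finset (Fin n)) (hdisj : Disjoint S M) (hcover : S ∪ M = Finset.univ) :
    EFO S + EFO M ≥ EFO Finset.univ :=
  EFO_subadditive_general n v B hB F hF0 EFO hEFO S M hdisj hcover
end

section
/- Let m ≥ 1 and let π̄_{m-1}, π̄_m be the average weights of the top m-1 and m positions respectively, with π̄_{m-1} ≥ π̄_m. Suppose an allocation x : Fin n → [0,1] is non-increasing, satisfies the supply constraint Σ_{i≤m} x_i ≤ m·π̄_m, and satisfies the budget constraint v_m (x_1 - x_m) ≤ B where B ≤ v_m π̄_{m-1}. Then x_1 ≤ 2 π̄_m. -/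
/-!
Monotonicity gives `x₁ + (m - 1) xₘ ≤ ∑_{i ≤ m} xᵢ ≤ m π̄ₘ`, and the budget constraint gives
`x₁ - xₘ ≤ π̄ₘ₋₁`. Adding `m - 1` times the second to the first eliminates `xₘ`:
`m x₁ ≤ m π̄ₘ + (m - 1) π̄ₘ₋₁ ≤ 2 m π̄ₘ`.
-/

open Finset

lemma antitoneOn_Icc_of_succ_le {x : ℕ → ℝ} {a n : ℕ}
    (h : ∀ i, a ≤ i → i < n → x (i + 1) ≤ x i) : AntitoneOn x (Set.Icc a n) :=
  antitoneOn_of_add_one_le Set.ordConnected_Icc fun i _ hi hi' => h i hi.1 hi'.2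

lemma add_mul_le_sum_Icc_of_antitoneOn {x : ℕ → ℝ} {a b : ℕ} (hab : a ≤ b)
    (hx : AntitoneOn x (Set.Icc a b)) :
    x a + ((b : ℝ) - a) * x b ≤ ∑ i ∈ Icc a b, x i := by
  have hb : b ∈ Set.Icc a b := ⟨hab, le_rfl⟩
  have htail : ((b : ℝ) - a) * x b ≤ ∑ i ∈ Icc (a + 1) b, x i := by
    have := card_nsmul_le_sum (Icc (a + 1) b) x (x b) fun i hi => by
      obtain ⟨hi₁, hi₂⟩ := mem_Icc.mp hi
      exact hx ⟨by omega, hi₂⟩ hb hi₂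
    rwa [Nat.card_Icc, nsmul_eq_mul, Nat.add_sub_add_right, Nat.cast_sub hab] at this
  rw [← insert_Icc_add_one_left_eq_Icc hab, sum_insert (by simp)]
  linarith

lemma le_two_mul_of_add_mul_le_of_sub_le {m x₁ xₘ p q : ℝ} (hm : 1 ≤ m)
    (hsum : x₁ + (m - 1) * xₘ ≤ m * p) (hspread : x₁ - xₘ ≤ q) (hq : (m - 1) * q ≤ m * p) :
    x₁ ≤ 2 * p := by
  have hm₀ : 0 ≤ m - 1 := sub_nonneg.mpr hm
  refine le_of_mul_le_mul_left ?_ (zero_lt_one.trans_le hm)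
  calc m * x₁ = (x₁ + (m - 1) * xₘ) + (m - 1) * (x₁ - xₘ) := by ring
    _ ≤ m * p + (m - 1) * q := add_le_add hsum (mul_le_mul_of_nonneg_left hspread hm₀)
    _ ≤ m * (2 * p) := by linarith

theorem top_allocation_bound_general (n m : ℕ) (hm : 1 ≤ m) (hmn : m ≤ n)
    (x v : ℕ → ℝ) (B pim1 pim : ℝ)   -- pim1 = π̄_{m-1}, pim = π̄_m (1-indexed agents)
    (hxmono : ∀ i, 1 ≤ i → i < n → x (i + 1) ≤ x i)
    (hvm : 0 < v m)
    (hpirel : ((m : ℝ) - 1) * pim1 ≤ m * pim)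
    (hsupply : ∑ i ∈ Finset.Icc 1 m, x i ≤ m * pim)
    (hbudget : v m * (x 1 - x m) ≤ B) (hB : B ≤ v m * pim1) :
    x 1 ≤ 2 * pim := by
  have hanti : AntitoneOn x (Set.Icc 1 m) :=
    (antitoneOn_Icc_of_succ_le hxmono).mono (Set.Icc_subset_Icc_right hmn)
  have hsum := (add_mul_le_sum_Icc_of_antitoneOn hm hanti).trans hsupply
  have hspread : x 1 - x m ≤ pim1 := le_of_mul_le_mul_left (hbudget.trans hB) hvm
  exact le_two_mul_of_add_mul_le_of_sub_le (by exact_mod_cast hm) (by exact_mod_cast hsum)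
    hspread hpirel

theorem top_allocation_bound (n m : ℕ) (hm : 1 ≤ m) (hmn : m ≤ n)
    (x v : ℕ → ℝ) (B pim1 pim : ℝ)   -- pim1 = π̄_{m-1}, pim = π̄_m (1-indexed agents)
    (hx01 : ∀ i, 1 ≤ i → i ≤ n → 0 ≤ x i ∧ x i ≤ 1)
    (hxmono : ∀ i, 1 ≤ i → i < n → x (i + 1) ≤ x i)
    (hvmono : ∀ i, 1 ≤ i → i < n → v (i + 1) ≤ v i)
    (hvpos : ∀ i, 1 ≤ i → i ≤ n → 0 ≤ v i)
    (hvm : 0 < v m)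
    (hpi : pim1 ≥ pim) (hpirel : ((m : ℝ) - 1) * pim1 ≤ m * pim)
    (hsupply : ∑ i ∈ Finset.Icc 1 m, x i ≤ m * pim)
    (hbudget : v m * (x 1 - x m) ≤ B) (hB : B ≤ v m * pim1) :
    x 1 ≤ 2 * pim :=
  top_allocation_bound_general n m hm hmn x v B pim1 pim hxmono hvm hpirel hsupply hbudget hB
end

section
/- Maximize N^3 x_H + N^2 x_L over real x_H, x_L ≥ 0 subject to x_H ≥ x_L, N(x_H - x_L) ≤ 1, and x_H + N x_L ≤ 1 (for integer N ≥ 2). The maximum is attained at x_H = 2/(N+1), x_L = (N-1)/(N(N+1)), with optimal value N^2 (2N - 1)/(N+1) + lower order terms; in particular the optimal value is at least 2N^2·(N - 1/2)/(N+1). -/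
theorem single_item_lp_optimum (N : ℕ) (hN : 2 ≤ N) :
    (0 ≤ 2 / ((N : ℝ) + 1) ∧ 0 ≤ ((N : ℝ) - 1) / (N * (N + 1)) ∧
      2 / ((N : ℝ) + 1) ≥ ((N : ℝ) - 1) / (N * (N + 1)) ∧
      (N : ℝ) * (2 / ((N : ℝ) + 1) - ((N : ℝ) - 1) / (N * (N + 1))) ≤ 1 ∧
      2 / ((N : ℝ) + 1) + (N : ℝ) * (((N : ℝ) - 1) / (N * (N + 1))) ≤ 1) ∧
    (∀ yH yL : ℝ, 0 ≤ yH → 0 ≤ yL → yH ≥ yL →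
      (N : ℝ) * (yH - yL) ≤ 1 → yH + (N : ℝ) * yL ≤ 1 →
      (N : ℝ) ^ 3 * yH + (N : ℝ) ^ 2 * yL
        ≤ (N : ℝ) ^ 3 * (2 / ((N : ℝ) + 1))
            + (N : ℝ) ^ 2 * (((N : ℝ) - 1) / (N * (N + 1)))) ∧
    (N : ℝ) ^ 3 * (2 / ((N : ℝ) + 1)) + (N : ℝ) ^ 2 * (((N : ℝ) - 1) / (N * (N + 1)))
      ≥ 2 * (N : ℝ) ^ 2 * ((N : ℝ) - 1 / 2) / ((N : ℝ) + 1) := by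
  have hn : (2:ℝ) ≤ (N:ℝ) := by exact_mod_cast hN
  have h0 : (0:ℝ) < N := by linarith
  have h1 : (0:ℝ) < (N:ℝ) + 1 := by linarith
  have h2 : (0:ℝ) < (N:ℝ) * ((N:ℝ) + 1) := by positivity
  refine ⟨⟨by positivity, div_nonneg (by linarith) (le_of_lt h2), ?_, ?_, ?_⟩, ?_, ?_⟩
  · rw [ge_iff_le, div_le_div_iff₀ h2 h1]; nlinarith
  · rw [div_sub_div _ _ h1.ne' h2.ne']
    rw [← mul_div_assoc, div_le_one (by positivity)]
    nlinarith
  · rw [← mul_div_assoc, div_add_div _ _ h1.ne' h2.ne', div_le_one (by positivity)]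
    nlinarith
  · intro yH yL _ _ _ hc1 hc2
    have key : (N:ℝ) ^ 3 * (2 / ((N : ℝ) + 1))
        + (N : ℝ) ^ 2 * (((N : ℝ) - 1) / (N * (N + 1))) = 2 * N^2 - N := by
      field_simp; ring
    rw [key]
    nlinarith [mul_le_mul_of_nonneg_left hc1 (by nlinarith : (0:ℝ) ≤ (N:ℝ)*((N:ℝ)-1)),
      mul_le_mul_of_nonneg_left hc2 (by positivity : (0:ℝ) ≤ (N:ℝ)^2)]
  · have key : (N:ℝ) ^ 3 * (2 / ((N : ℝ) + 1))
        + (N : ℝ) ^ 2 * (((N : ℝ) - 1) / (N * (N + 1))) = 2 * N^2 - N := by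
      field_simp; ring
    rw [key, ge_iff_le, div_le_iff₀ h1]
    nlinarith
end

section
/- For 0 < p < 1/2, let q(p) = (1-p)p + p(1-p)/(1-2p)^2 and suppose mechanism M1 obtains revenue at least (1-p)p·A - (p(1-p)/(1-2p)^2)·C and mechanism M2 obtains revenue at least C, where A + C ≥ T ≥ 0 and A, C ≥ 0. Then the convex combination running M2 with probability q/(1+q) and M1 with probability 1/(1+q) obtains revenue at least T / (1 + 1/((1-p)p) + 1/(1-2p)^2). -/
/-!
Write `a = (1-p)p` and `b = p(1-p)/(1-2p)^2`, so `q = a + b`. Mixing the two revenue bounds with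
weights `1` and `q` cancels the `C`-penalty of `M1`: `M1 + q M2 ≥ aA - bC + (a+b)C = a(A+C) ≥ aT`.
Since `b/a = 1/(1-2p)^2`, the target denominator is `1 + 1/a + b/a = (1+q)/a`, and dividing by `1+q`
gives the claim.
-/

theorem mul_le_add_mul_of_sub_le {a b A C T M₁ M₂ : ℝ} (ha : 0 ≤ a) (hb : 0 ≤ b)
    (hAC : T ≤ A + C) (hM₁ : a * A - b * C ≤ M₁) (hM₂ : C ≤ M₂) :
    a * T ≤ M₁ + (a + b) * M₂ := by
  nlinarith [mul_le_mul_of_nonneg_left hAC ha, mul_le_mul_of_nonneg_left hM₂ (add_nonneg ha hb)]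

theorem one_add_inv_add_inv_sq_eq {p : ℝ} (hp0 : p ≠ 0) (hp1 : 1 - p ≠ 0) :
    1 + 1 / ((1 - p) * p) + 1 / (1 - 2 * p) ^ 2 =
      (1 + ((1 - p) * p + p * (1 - p) / (1 - 2 * p) ^ 2)) / ((1 - p) * p) := by
  field_simp
  ring

theorem convex_combination_approximation_general (p A C T M1 M2 : ℝ)
    (hp0 : 0 < p) (hp2 : p < 1/2)
    (hAC : A + C ≥ T)
    (hM1 : M1 ≥ (1 - p) * p * A - (p * (1 - p) / (1 - 2 * p) ^ 2) * C)
    (hM2 : M2 ≥ C) :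
    (1 / (1 + ((1 - p) * p + p * (1 - p) / (1 - 2 * p) ^ 2))) * M1 +
      (((1 - p) * p + p * (1 - p) / (1 - 2 * p) ^ 2) /
        (1 + ((1 - p) * p + p * (1 - p) / (1 - 2 * p) ^ 2))) * M2
    ≥ T / (1 + 1 / ((1 - p) * p) + 1 / (1 - 2 * p) ^ 2) := by
  have hp1 : 0 < 1 - p := by linarith
  rw [one_add_inv_add_inv_sq_eq hp0.ne' hp1.ne']
  set a := (1 - p) * p
  set b := p * (1 - p) / (1 - 2 * p) ^ 2
  have ha : 0 < a := by positivity
  have hb : 0 ≤ b := by positivity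
  calc T / ((1 + (a + b)) / a) = a * T / (1 + (a + b)) := by rw [div_div_eq_mul_div, mul_comm]
    _ ≤ (M1 + (a + b) * M2) / (1 + (a + b)) :=
      div_le_div_of_nonneg_right (mul_le_add_mul_of_sub_le ha.le hb hAC hM1 hM2) (by positivity)
    _ = 1 / (1 + (a + b)) * M1 + (a + b) / (1 + (a + b)) * M2 := by ring

theorem convex_combination_approximation (p A C T M1 M2 : ℝ)
    (hp0 : 0 < p) (hp2 : p < 1/2)
    (hA : 0 ≤ A) (hC : 0 ≤ C) (hT : 0 ≤ T) (hAC : A + C ≥ T)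
    (hM1 : M1 ≥ (1 - p) * p * A - (p * (1 - p) / (1 - 2 * p) ^ 2) * C)
    (hM2 : M2 ≥ C) :
    (1 / (1 + ((1 - p) * p + p * (1 - p) / (1 - 2 * p) ^ 2))) * M1 +
      (((1 - p) * p + p * (1 - p) / (1 - 2 * p) ^ 2) /
        (1 + ((1 - p) * p + p * (1 - p) / (1 - 2 * p) ^ 2))) * M2
    ≥ T / (1 + 1 / ((1 - p) * p) + 1 / (1 - 2 * p) ^ 2) :=
  convex_combination_approximation_general p A C T M1 M2 hp0 hp2 hAC hM1 hM2
end

section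
/- Suppose x, y : Fin n → ℝ are non-increasing nonnegative sequences with x_j = y_j for all j > i, x_i ≥ y_i, and a valuation vector v, another vector w with v_{j+1} ≥ w_j for all j ≥ i. Then Σ_{j=i+1}^{n} (x_{j-1} - x_j) v_j ≥ Σ_{j=i+1}^{n} (y_{j-1} - y_j) w_{j-1}. -/
/-! Termwise domination: beyond `i` the two allocations coincide and at `i` the clinching one is
larger, so every decrement of `x` dominates the corresponding decrement of `y`, while the
one-ahead condition makes each price `v j` dominate the estimate `w (j - 1)`. -/

theorem sub_succ_le_sub_succ_of_eq_above {x y : ℕ → ℝ} {i k : ℕ}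
    (hxy : ∀ j, i < j → x j = y j) (hxi : y i ≤ x i) (hk : i ≤ k) :
    y k - y (k + 1) ≤ x k - x (k + 1) := by
  rw [hxy (k + 1) (by omega)]
  rcases hk.eq_or_lt with rfl | hlt
  · linarith
  · rw [hxy k hlt]

theorem profit_extractor_domination_general (n i : ℕ) (x y v w : ℕ → ℝ)
    (hymono : ∀ j, y (j + 1) ≤ y j)
    (hwpos : ∀ j, 0 ≤ w j)
    (hxy : ∀ j, i < j → x j = y j) (hxi : x i ≥ y i)
    (hvw : ∀ j, i ≤ j → w j ≤ v (j + 1)) :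
    ∑ j ∈ Finset.Ico (i + 1) n, (x (j - 1) - x j) * v j
      ≥ ∑ j ∈ Finset.Ico (i + 1) n, (y (j - 1) - y j) * w (j - 1) := by
  refine Finset.sum_le_sum fun j hj => ?_
  have hj := Finset.mem_Ico.1 hj
  obtain ⟨k, rfl⟩ : ∃ k, j = k + 1 := ⟨j - 1, by omega⟩
  have hk : i ≤ k := by omega
  rw [Nat.add_sub_cancel]
  have hdrop := sub_succ_le_sub_succ_of_eq_above hxy hxi hk
  exact mul_le_mul hdrop (hvw k hk) (hwpos k) ((sub_nonneg.2 (hymono k)).trans hdrop)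

theorem profit_extractor_domination (n i : ℕ) (x y v w : ℕ → ℝ)
    (hxmono : ∀ j, x (j + 1) ≤ x j) (hxpos : ∀ j, 0 ≤ x j)
    (hymono : ∀ j, y (j + 1) ≤ y j) (hypos : ∀ j, 0 ≤ y j)
    (hvpos : ∀ j, 0 ≤ v j) (hwpos : ∀ j, 0 ≤ w j)
    (hxy : ∀ j, i < j → x j = y j) (hxi : x i ≥ y i)
    (hvw : ∀ j, i ≤ j → w j ≤ v (j + 1)) :
    ∑ j ∈ Finset.Ico (i + 1) n, (x (j - 1) - x j) * v j
      ≥ ∑ j ∈ Finset.Ico (i + 1) n, (y (j - 1) - y j) * w (j - 1) :=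
  profit_extractor_domination_general n i x y v w hymono hwpos hxy hxi hvw
end
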